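/- arXiv:2307.11127 — 2 statements merged into one kernel-verified Lean document; each statement's English description precedes it below -/
import Mathlib

section
/- Consider the linear regression model Y0 = Σ_j w*_j Y_j + ν where ν = ε_0 − Σ_j w*_j ε_j, with ε_j = Y_j − E[Y_j], the ε_j mutually uncorrelated, Var(ε_j) = σ_j² > 0, and ε_0 uncorrelated with each ε_j. Then for any j with w*_j ≠ 0, E[ν Y_j] = −w*_j σ_j² ≠ 0; that is, the regressor Y_j is correlated with the error term (implicit endogeneity). -/
/-!
The error `ν` is a combination of the centred variables `εᵢ`, so it has mean
zero and `E[ν Yⱼ] = cov(ν, Yⱼ)`. By bilinearity this is `cov(Y₀, Yⱼ) - ∑ᵢ w*ᵢ cov(Yᵢ, Yⱼ)`, and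
the covariances are the correlations `E[εᵢ εⱼ]`: all of them vanish except `E[εⱼ²] = σⱼ²`.
-/

open MeasureTheory ProbabilityTheory

namespace ProbabilityTheory

variable {Ω ι : Type*} {mΩ : MeasurableSpace Ω} {μ : Measure Ω} {X Y : Ω → ℝ}

lemma integral_sub_integral [IsProbabilityMeasure μ] (hX : Integrable X μ) :
    ∫ ω, (X ω - μ[X]) ∂μ = 0 := by
  rw [integral_sub hX (integrable_const _)]
  simp

lemma integral_fun_sub_sum_const_mul [Fintype ι] {Z : ι → Ω → ℝ} (hX : Integrable X μ)
    (hZ : ∀ i, Integrable (Z i) μ) (w : ι → ℝ) :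
    ∫ ω, (X ω - ∑ i, w i * Z i ω) ∂μ = μ[X] - ∑ i, w i * μ[Z i] := by
  rw [integral_sub hX (integrable_finsetSum _ fun i _ ↦ (hZ i).const_mul (w i)),
    integral_finsetSum _ fun i _ ↦ (hZ i).const_mul (w i)]
  simp only [integral_const_mul]

lemma covariance_fun_sub_sum_const_mul_left [IsFiniteMeasure μ] [Fintype ι] {Z : ι → Ω → ℝ}
    (hX : MemLp X 2 μ) (hZ : ∀ i, MemLp (Z i) 2 μ) (hY : MemLp Y 2 μ) (w : ι → ℝ) :
    cov[fun ω ↦ X ω - ∑ i, w i * Z i ω, Y; μ] = cov[X, Y; μ] - ∑ i, w i * cov[Z i, Y; μ] := by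
  rw [covariance_fun_sub_left hX (memLp_finsetSum _ fun i _ ↦ (hZ i).const_mul (w i)) hY,
    covariance_fun_sum_left (fun i ↦ (hZ i).const_mul (w i)) hY]
  simp only [covariance_const_mul_left]

lemma integral_mul_eq_covariance_of_integral_eq_zero [IsProbabilityMeasure μ]
    (hX : MemLp X 2 μ) (hY : MemLp Y 2 μ) (h : μ[X] = 0) :
    ∫ ω, X ω * Y ω ∂μ = cov[X, Y; μ] := by
  rw [covariance_eq_sub hX hY, h, zero_mul, sub_zero]
  rfl

end ProbabilityTheory

theorem implicit_endogeneity_general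
    {Ω : Type*} [MeasureSpace Ω] [IsProbabilityMeasure (ℙ : Measure Ω)]
    (J : ℕ) (Y0 : Ω → ℝ) (Y : Fin J → Ω → ℝ)
    (hY0L2 : MemLp Y0 2 (ℙ : Measure Ω)) (hYL2 : ∀ j, MemLp (Y j) 2 (ℙ : Measure Ω))
    (w : Fin J → ℝ) (σ2 : Fin J → ℝ)
    (ε0 : Ω → ℝ) (ε : Fin J → Ω → ℝ)
    (hε0 : ε0 = fun ω => Y0 ω - ∫ ω', Y0 ω')
    (hε : ∀ j, ε j = fun ω => Y j ω - ∫ ω', Y j ω')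
    (huncorr : ∀ i j, i ≠ j → ∫ ω, ε i ω * ε j ω = 0)
    (hvar : ∀ j, ∫ ω, (ε j ω) ^ 2 = σ2 j)
    (hvar_pos : ∀ j, 0 < σ2 j)
    (h0uncorr : ∀ j, ∫ ω, ε0 ω * ε j ω = 0)
    (ν : Ω → ℝ) (hν : ν = fun ω => ε0 ω - ∑ j, w j * ε j ω) :
    ∀ j, w j ≠ 0 →
      (∫ ω, ν ω * Y j ω) = -(w j) * σ2 j ∧ (∫ ω, ν ω * Y j ω) ≠ 0 := by
  intro j hwj
  have hε0L2 : MemLp ε0 2 ℙ := hε0 ▸ hY0L2.sub (memLp_const _)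
  have hεL2 i : MemLp (ε i) 2 ℙ := hε i ▸ (hYL2 i).sub (memLp_const _)
  have hνL2 : MemLp ν 2 ℙ :=
    hν ▸ hε0L2.sub (memLp_finsetSum _ fun i _ ↦ (hεL2 i).const_mul (w i))
  have hε0_mean : ∫ ω, ε0 ω = 0 := hε0 ▸ integral_sub_integral (hY0L2.integrable one_le_two)
  have hε_mean i : ∫ ω, ε i ω = 0 := hε i ▸ integral_sub_integral ((hYL2 i).integrable one_le_two)
  have hν_mean : ∫ ω, ν ω = 0 := by
    rw [hν, integral_fun_sub_sum_const_mul (hε0L2.integrable one_le_two)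
      (fun i ↦ (hεL2 i).integrable one_le_two), hε0_mean]
    simp only [hε_mean, mul_zero, Finset.sum_const_zero, sub_zero]
  have hcov0 : cov[ε0, Y j] = ∫ ω, ε0 ω * ε j ω := by
    rw [hε0, covariance_sub_const_left (hY0L2.integrable one_le_two), hε j]
    rfl
  have hcov i : cov[ε i, Y j] = ∫ ω, ε i ω * ε j ω := by
    rw [hε i, covariance_sub_const_left ((hYL2 i).integrable one_le_two), hε j]
    rfl
  have key : ∫ ω, ν ω * Y j ω = -(w j) * σ2 j := calc
    _ = cov[ν, Y j] := integral_mul_eq_covariance_of_integral_eq_zero hνL2 (hYL2 j) hν_mean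
    _ = cov[ε0, Y j] - ∑ i, w i * cov[ε i, Y j] := by
      rw [hν]; exact covariance_fun_sub_sum_const_mul_left hε0L2 hεL2 (hYL2 j) w
    _ = -(w j) * σ2 j := by
      rw [hcov0, h0uncorr, Finset.sum_eq_single j (fun i _ hij ↦ by rw [hcov, huncorr i j hij,
        mul_zero]) (by simp), hcov, ← hvar j]
      simp only [pow_two, zero_sub, neg_mul]
  exact ⟨key, key ▸ mul_ne_zero (neg_ne_zero.2 hwj) (hvar_pos j).ne'⟩

/-- implicit endogeneity — the regressor is correlated with the error term. -/
theorem implicit_endogeneity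
    {Ω : Type*} [MeasureSpace Ω] [IsProbabilityMeasure (ℙ : Measure Ω)]
    (J : ℕ) (Y0 : Ω → ℝ) (Y : Fin J → Ω → ℝ)
    (hY0L2 : MemLp Y0 2 (ℙ : Measure Ω)) (hYL2 : ∀ j, MemLp (Y j) 2 (ℙ : Measure Ω))
    (w : Fin J → ℝ) (σ2 : Fin J → ℝ)
    (ε0 : Ω → ℝ) (ε : Fin J → Ω → ℝ)
    (hε0 : ε0 = fun ω => Y0 ω - ∫ ω', Y0 ω')
    (hε : ∀ j, ε j = fun ω => Y j ω - ∫ ω', Y j ω')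
    (hlin : ∫ ω, Y0 ω = ∑ j, w j * ∫ ω, Y j ω)
    (huncorr : ∀ i j, i ≠ j → ∫ ω, ε i ω * ε j ω = 0)
    (hvar : ∀ j, ∫ ω, (ε j ω) ^ 2 = σ2 j)
    (hvar_pos : ∀ j, 0 < σ2 j)
    (h0uncorr : ∀ j, ∫ ω, ε0 ω * ε j ω = 0)
    (ν : Ω → ℝ) (hν : ν = fun ω => ε0 ω - ∑ j, w j * ε j ω) :
    ∀ j, w j ≠ 0 →
      (∫ ω, ν ω * Y j ω) = -(w j) * σ2 j ∧ (∫ ω, ν ω * Y j ω) ≠ 0 :=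
  implicit_endogeneity_general J Y0 Y hY0L2 hYL2 w σ2 ε0 ε hε0 hε huncorr hvar hvar_pos h0uncorr ν
    hν
end

section
/- Under the measurement-error setup, the probability limit of the unconstrained least-squares estimator of the synthetic control weights equals w* − (Q* + Σ)^{-1} Σ w*, where Q* and Σ are the diagonal matrices of second moments of the signals and the error variances respectively; in particular the least-squares estimator is asymptotically biased whenever Σ w* ≠ 0. -/
open MeasureTheory ProbabilityTheory Filter

/-- Convergence in probability to a constant, for metric-space-valued random elements. -/
def TendstoInProb {Ω : Type*} [MeasureSpace Ω] {E : Type*} [PseudoMetricSpace E]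
    (X : ℕ → Ω → E) (c : E) : Prop :=
  ∀ δ > (0 : ℝ), Tendsto (fun n => (ℙ {ω | δ ≤ dist (X n ω) c}).toReal) atTop (nhds 0)

open Topology Matrix

/-! The least-squares weights solve the normal equations `Ĝ ŵ = ĉ`, where `Ĝ` is the sample Gram
matrix of the observed donors `μ + e` and `ĉ` the vector of their sample cross moments with `Y₀`.
Errors are asymptotically orthogonal to the signals and to each other, so `Ĝ → Q* + Σ` while
`ĉ → Q* w*`: measurement error inflates the Gram matrix but not the cross moments. As
`(A, b) ↦ A⁻¹ b` is continuous at the invertible limit and `Ĝ` is invertible with probability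
tending to one, `ŵ → (Q* + Σ)⁻¹ Q* w* = w* − (Q* + Σ)⁻¹ Σ w*` in probability. -/

section InProbability

variable {Ω : Type*} [MeasureSpace Ω] {E F : Type*} [PseudoMetricSpace E] [PseudoMetricSpace F]

lemma TendstoInProb.of_tendsto {x : ℕ → E} {c : E} (h : Tendsto x atTop (𝓝 c)) :
    TendstoInProb (fun n (_ : Ω) => x n) c := by
  intro δ hδ
  refine tendsto_const_nhds.congr' ?_
  filter_upwards [Metric.tendsto_nhds.1 h δ hδ] with n hn
  simp [not_le.2 hn]

variable [IsFiniteMeasure (ℙ : Measure Ω)]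

lemma TendstoInProb.comp_of_eq_near {X : ℕ → Ω → E} {Y : ℕ → Ω → F} {c : E} {f : E → F}
    {U : Set E} (hX : TendstoInProb X c) (hf : ContinuousAt f c) (hU : U ∈ 𝓝 c)
    (hY : ∀ n ω, X n ω ∈ U → Y n ω = f (X n ω)) :
    TendstoInProb Y (f c) := by
  intro δ hδ
  obtain ⟨η, hη, hball⟩ := Metric.mem_nhds_iff.1
    (Filter.inter_mem hU (hf (Metric.ball_mem_nhds (f c) hδ)))
  refine squeeze_zero (fun _ => ENNReal.toReal_nonneg) (fun n => ?_) (hX η hη)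
  refine measureReal_mono fun ω hω => ?_
  by_contra hfar
  obtain ⟨hωU, hωf⟩ := hball (Metric.mem_ball.2 (not_le.1 hfar))
  have hω' : δ ≤ dist (Y n ω) (f c) := hω
  rw [hY n ω hωU] at hω'
  exact not_le.2 (Metric.mem_ball.1 hωf) hω'

lemma TendstoInProb.comp {X : ℕ → Ω → E} {c : E} {f : E → F} (hX : TendstoInProb X c)
    (hf : ContinuousAt f c) : TendstoInProb (fun n ω => f (X n ω)) (f c) :=
  hX.comp_of_eq_near hf Filter.univ_mem fun _ _ _ => rfl

lemma TendstoInProb.prodMk {X : ℕ → Ω → E} {Y : ℕ → Ω → F} {a : E} {b : F}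
    (hX : TendstoInProb X a) (hY : TendstoInProb Y b) :
    TendstoInProb (fun n ω => (X n ω, Y n ω)) (a, b) := by
  intro δ hδ
  refine squeeze_zero (fun _ => ENNReal.toReal_nonneg) (fun n => ?_)
    (by simpa using (hX δ hδ).add (hY δ hδ))
  refine (measureReal_mono fun ω hω => ?_).trans (measureReal_union_le _ _)
  simpa [Prod.dist_eq, le_max_iff] using hω

lemma tendstoInProb_pi {ι : Type*} [Fintype ι] {E : ι → Type*} [∀ i, PseudoMetricSpace (E i)]
    {X : ℕ → Ω → ∀ i, E i} {a : ∀ i, E i} (h : ∀ i, TendstoInProb (fun n ω => X n ω i) (a i)) :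
    TendstoInProb X a := by
  intro δ hδ
  refine squeeze_zero (fun _ => ENNReal.toReal_nonneg) (fun n => ?_)
    (by simpa using tendsto_finsetSum Finset.univ fun i _ => h i δ hδ)
  refine (measureReal_mono fun ω hω => ?_).trans (measureReal_iUnion_fintype_le _)
  by_contra hnear
  simp only [Set.mem_iUnion, not_exists] at hnear
  exact not_le.2 ((dist_pi_lt_iff hδ).2 fun i => not_le.1 (hnear i)) hω

lemma TendstoInProb.add {X Y : ℕ → Ω → ℝ} {a b : ℝ} (hX : TendstoInProb X a)
    (hY : TendstoInProb Y b) : TendstoInProb (fun n ω => X n ω + Y n ω) (a + b) :=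
  (hX.prodMk hY).comp (f := fun p : ℝ × ℝ => p.1 + p.2) continuous_add.continuousAt

lemma TendstoInProb.mul_const {X : ℕ → Ω → ℝ} {a : ℝ} (hX : TendstoInProb X a) (r : ℝ) :
    TendstoInProb (fun n ω => X n ω * r) (a * r) :=
  hX.comp (f := (· * r)) (continuous_mul_const r).continuousAt

lemma tendstoInProb_sum {ι : Type*} [Fintype ι] {X : ι → ℕ → Ω → ℝ} {a : ι → ℝ}
    (h : ∀ i, TendstoInProb (X i) (a i)) :
    TendstoInProb (fun n ω => ∑ i, X i n ω) (∑ i, a i) :=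
  (tendstoInProb_pi (X := fun n ω i => X i n ω) h).comp (f := fun v : ι → ℝ => ∑ i, v i)
    (continuous_finsetSum _ fun i _ => continuous_apply i).continuousAt

end InProbability

noncomputable section LeastSquares

def sampleMean (T : ℕ) (f : ℕ → ℝ) : ℝ := (1 / (T : ℝ)) * ∑ t ∈ Finset.range T, f t

lemma sampleMean_add (T : ℕ) (f g : ℕ → ℝ) :
    sampleMean T (fun t => f t + g t) = sampleMean T f + sampleMean T g := by
  simp only [sampleMean, Finset.sum_add_distrib, mul_add]

lemma sampleMean_sub (T : ℕ) (f g : ℕ → ℝ) :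
    sampleMean T (fun t => f t - g t) = sampleMean T f - sampleMean T g := by
  simp only [sampleMean, Finset.sum_sub_distrib, mul_sub]

lemma sampleMean_mul_const (T : ℕ) (f : ℕ → ℝ) (c : ℝ) :
    sampleMean T (fun t => f t * c) = sampleMean T f * c := by
  simp only [sampleMean, ← Finset.sum_mul, mul_assoc]

lemma sampleMean_sum {ι : Type*} (s : Finset ι) (T : ℕ) (f : ι → ℕ → ℝ) :
    sampleMean T (fun t => ∑ i ∈ s, f i t) = ∑ i ∈ s, sampleMean T (f i) := by
  simp only [sampleMean, Finset.mul_sum]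
  exact Finset.sum_comm

variable {ι : Type*} [Fintype ι]

def sampleGram (T : ℕ) (x : ι → ℕ → ℝ) : Matrix ι ι ℝ :=
  Matrix.of fun i j => sampleMean T fun t => x i t * x j t

def sampleCross (T : ℕ) (x : ι → ℕ → ℝ) (y : ℕ → ℝ) : ι → ℝ :=
  fun i => sampleMean T fun t => x i t * y t

lemma hasDerivAt_sampleMean_sq_sub_mul (T : ℕ) (r x : ℕ → ℝ) (s : ℝ) :
    HasDerivAt (fun s => sampleMean T fun t => (r t - s * x t) ^ 2)
      (-2 * sampleMean T fun t => (r t - s * x t) * x t) s := by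
  have hterm : ∀ t, HasDerivAt (fun s => (r t - s * x t) ^ 2) (-2 * ((r t - s * x t) * x t)) s :=
    fun t => (((hasDerivAt_mul_const (x t)).const_sub (r t)).fun_pow 2).congr_deriv (by ring)
  refine ((HasDerivAt.fun_sum fun t _ => hterm t).const_mul (1 / (T : ℝ))).congr_deriv ?_
  simp only [sampleMean, ← Finset.mul_sum]
  ring

lemma sampleMean_residual_mul_eq_zero_of_isMinOn [DecidableEq ι] {T : ℕ} {x : ι → ℕ → ℝ}
    {y : ℕ → ℝ} {w₀ : ι → ℝ}
    (h : IsMinOn (fun w => sampleMean T fun t => (y t - ∑ j, w j * x j t) ^ 2) Set.univ w₀)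
    (i : ι) : sampleMean T (fun t => (y t - ∑ j, w₀ j * x j t) * x i t) = 0 := by
  set r : ℕ → ℝ := fun t => y t - ∑ j, w₀ j * x j t
  -- first-order condition along the `i`-th coordinate axis
  have hline : ∀ s,
      (sampleMean T fun t => (y t - ∑ j, (w₀ + Pi.single i s : ι → ℝ) j * x j t) ^ 2)
        = sampleMean T fun t => (r t - s * x i t) ^ 2 := by
    intro s
    simp [r, add_mul, Finset.sum_add_distrib, Pi.single_apply, sub_sub]
  have hmin : IsLocalMin (fun s => sampleMean T fun t => (r t - s * x i t) ^ 2) 0 := by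
    refine IsMinOn.isLocalMin (s := Set.univ) (fun s _ => ?_) Filter.univ_mem
    calc (sampleMean T fun t => (r t - 0 * x i t) ^ 2)
        = sampleMean T fun t => (y t - ∑ j, w₀ j * x j t) ^ 2 := by
          simp only [r, zero_mul, sub_zero]
      _ ≤ _ := h (Set.mem_univ (w₀ + Pi.single i s : ι → ℝ))
      _ = _ := hline s
  simpa using hmin.hasDerivAt_eq_zero (hasDerivAt_sampleMean_sq_sub_mul T r (x i) 0)

lemma sampleGram_mulVec_eq_sampleCross_of_isMinOn [DecidableEq ι] {T : ℕ} {x : ι → ℕ → ℝ}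
    {y : ℕ → ℝ} {w₀ : ι → ℝ}
    (h : IsMinOn (fun w => sampleMean T fun t => (y t - ∑ j, w j * x j t) ^ 2) Set.univ w₀) :
    sampleGram T x *ᵥ w₀ = sampleCross T x y := by
  funext i
  have h0 := sampleMean_residual_mul_eq_zero_of_isMinOn h i
  have hexpand : (fun t => (y t - ∑ j, w₀ j * x j t) * x i t)
      = fun t => x i t * y t - ∑ j, x i t * x j t * w₀ j := by
    funext t
    rw [sub_mul, Finset.sum_mul]
    congr 1
    · ring
    · exact Finset.sum_congr rfl fun j _ => by ring
  rw [hexpand] at h0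
  simp only [sampleMean_sub, sampleMean_sum, sampleMean_mul_const] at h0
  exact (sub_eq_zero.1 h0).symm

end LeastSquares

section SampleMoments

variable {Ω : Type*} [MeasureSpace Ω] {ι : Type*}

lemma tendstoInProb_sampleMean_mul_diagonal [DecidableEq ι] {x : ι → ℕ → Ω → ℝ} {d : ι → ℝ}
    (hsq : ∀ i, TendstoInProb (fun T ω => sampleMean T fun t => x i t ω ^ 2) (d i))
    (horth : ∀ i j, i ≠ j →
      TendstoInProb (fun T ω => sampleMean T fun t => x i t ω * x j t ω) 0) (i j : ι) :
    TendstoInProb (fun T ω => sampleMean T fun t => x i t ω * x j t ω) (diagonal d i j) := by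
  rcases eq_or_ne i j with rfl | hij
  · simpa [sq] using hsq i
  · simpa [hij] using horth i j hij

variable [IsFiniteMeasure (ℙ : Measure Ω)] [Fintype ι]

lemma tendstoInProb_sampleCross_add {x y : ι → ℕ → Ω → ℝ} {z : ℕ → Ω → ℝ} {A : Matrix ι ι ℝ}
    (w : ι → ℝ)
    (hx : ∀ i j, TendstoInProb (fun T ω => sampleMean T fun t => x i t ω * x j t ω) (A i j))
    (hxy : ∀ i j, TendstoInProb (fun T ω => sampleMean T fun t => x i t ω * y j t ω) 0)
    (hxz : ∀ i, TendstoInProb (fun T ω => sampleMean T fun t => x i t ω * z t ω) 0)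
    (hzy : ∀ i, TendstoInProb (fun T ω => sampleMean T fun t => z t ω * y i t ω) 0) :
    TendstoInProb
      (fun T ω => sampleCross T (fun i t => x i t ω + y i t ω) fun t => ∑ j, w j * x j t ω + z t ω)
      (A *ᵥ w) := by
  refine tendstoInProb_pi fun i => ?_
  have hsplit : ∀ T ω, sampleCross T (fun i t => x i t ω + y i t ω)
      (fun t => ∑ j, w j * x j t ω + z t ω) i
      = ∑ j, (sampleMean T fun t => x i t ω * x j t ω) * w j
        + ∑ j, (sampleMean T fun t => x j t ω * y i t ω) * w j
        + (sampleMean T fun t => x i t ω * z t ω) + sampleMean T fun t => z t ω * y i t ω := by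
    intro T ω
    simp only [sampleCross, ← sampleMean_mul_const, ← sampleMean_sum, ← sampleMean_add]
    congr 1
    funext t
    have hxw : x i t ω * ∑ j, w j * x j t ω = ∑ j, x i t ω * x j t ω * w j := by
      rw [Finset.mul_sum]
      exact Finset.sum_congr rfl fun j _ => by ring
    have hyw : y i t ω * ∑ j, w j * x j t ω = ∑ j, x j t ω * y i t ω * w j := by
      rw [Finset.mul_sum]
      exact Finset.sum_congr rfl fun j _ => by ring
    rw [add_mul, mul_add, mul_add, hxw, hyw]
    ring
  simp only [hsplit]
  simpa [mulVec, dotProduct] using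
    (((tendstoInProb_sum fun j => (hx i j).mul_const (w j)).add
      (tendstoInProb_sum fun j => (hxy j i).mul_const (w j))).add (hxz i)).add (hzy i)

end SampleMoments

section LinearSystem

attribute [local instance] Matrix.seminormedAddCommGroup -- the entrywise sup metric

variable {Ω : Type*} [MeasureSpace Ω] [IsFiniteMeasure (ℙ : Measure Ω)] {ι : Type*} [Fintype ι]

lemma tendstoInProb_matrix {κ : Type*} [Fintype κ] {X : ℕ → Ω → Matrix ι κ ℝ}
    {A : Matrix ι κ ℝ} (h : ∀ i j, TendstoInProb (fun n ω => X n ω i j) (A i j)) :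
    TendstoInProb X A :=
  tendstoInProb_pi fun i => tendstoInProb_pi fun j => h i j

lemma tendstoInProb_sampleGram_add {x y : ι → ℕ → Ω → ℝ} {A B : Matrix ι ι ℝ}
    (hx : ∀ i j, TendstoInProb (fun T ω => sampleMean T fun t => x i t ω * x j t ω) (A i j))
    (hy : ∀ i j, TendstoInProb (fun T ω => sampleMean T fun t => y i t ω * y j t ω) (B i j))
    (hxy : ∀ i j, TendstoInProb (fun T ω => sampleMean T fun t => x i t ω * y j t ω) 0) :
    TendstoInProb (fun T ω => sampleGram T fun i t => x i t ω + y i t ω) (A + B) := by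
  refine tendstoInProb_matrix fun i j => ?_
  have hsplit : ∀ T ω, sampleGram T (fun i t => x i t ω + y i t ω) i j
      = (sampleMean T fun t => x i t ω * x j t ω) + (sampleMean T fun t => x i t ω * y j t ω)
        + (sampleMean T fun t => x j t ω * y i t ω) + sampleMean T fun t => y i t ω * y j t ω := by
    intro T ω
    simp only [sampleGram, of_apply, ← sampleMean_add]
    congr 1
    funext t
    ring
  simp only [hsplit]
  simpa using (((hx i j).add (hxy i j)).add (hxy j i)).add (hy i j)

lemma continuousAt_inv_mulVec [DecidableEq ι] {A : Matrix ι ι ℝ} (hA : IsUnit A.det)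
    (b : ι → ℝ) : ContinuousAt (fun p : Matrix ι ι ℝ × (ι → ℝ) => p.1⁻¹ *ᵥ p.2) (A, b) := by
  have hinv : ContinuousAt Inv.inv A := continuousAt_matrix_inv A (by
    rw [Ring.inverse_eq_inv']
    exact continuousAt_inv₀ hA.ne_zero)
  exact (continuous_fst.matrix_mulVec continuous_snd).continuousAt.comp
    (f := fun p : Matrix ι ι ℝ × (ι → ℝ) => (p.1⁻¹, p.2))
    ((hinv.comp continuousAt_fst).prodMk continuousAt_snd)

lemma TendstoInProb.of_mulVec_eq [DecidableEq ι] {A : ℕ → Ω → Matrix ι ι ℝ}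
    {b x : ℕ → Ω → ι → ℝ} {A₀ : Matrix ι ι ℝ} {b₀ : ι → ℝ} (hA : TendstoInProb A A₀)
    (hb : TendstoInProb b b₀) (hA₀ : IsUnit A₀.det) (hx : ∀ n ω, A n ω *ᵥ x n ω = b n ω) :
    TendstoInProb x (A₀⁻¹ *ᵥ b₀) := by
  have hU : IsOpen {p : Matrix ι ι ℝ × (ι → ℝ) | IsUnit p.1.det} :=
    Units.isOpen.preimage continuous_fst.matrix_det
  refine (hA.prodMk hb).comp_of_eq_near (f := fun p => p.1⁻¹ *ᵥ p.2) (c := (A₀, b₀))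
    (continuousAt_inv_mulVec hA₀ b₀) (hU.mem_nhds hA₀) fun n ω hdet => ?_
  rw [← hx n ω, mulVec_mulVec, nonsing_inv_mul _ hdet, one_mulVec]

end LinearSystem

lemma inv_add_mulVec_mulVec {K ι : Type*} [Field K] [Fintype ι] [DecidableEq ι]
    {A B : Matrix ι ι K} (h : IsUnit (A + B).det) (w : ι → K) :
    (A + B)⁻¹ *ᵥ (A *ᵥ w) = w - ((A + B)⁻¹ * B) *ᵥ w := by
  have hA : (A + B)⁻¹ * A = (A + B)⁻¹ * (A + B) - (A + B)⁻¹ * B := by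
    rw [← Matrix.mul_sub, add_sub_cancel_right]
  rw [mulVec_mulVec, hA, nonsing_inv_mul _ h, sub_mulVec, one_mulVec]

lemma sub_inv_mul_mulVec_ne_self {K ι : Type*} [Field K] [Fintype ι] [DecidableEq ι]
    {D S : Matrix ι ι K} (hD : IsUnit D.det) {w : ι → K} (hS : S *ᵥ w ≠ 0) :
    w - (D⁻¹ * S) *ᵥ w ≠ w := by
  intro h
  apply hS
  rw [sub_eq_self] at h
  rw [← Matrix.one_mul S, ← mul_nonsing_inv D hD, Matrix.mul_assoc, ← mulVec_mulVec, h, mulVec_zero]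

theorem ls_asymptotic_bias_general
    {Ω : Type*} [MeasureSpace Ω] [IsProbabilityMeasure (ℙ : Measure Ω)]
    (J : ℕ)
    (μ : Fin J → ℕ → ℝ)                    -- signals of the untreated units
    (e : Fin J → ℕ → Ω → ℝ)               -- measurement errors of untreated units
    (e0 : ℕ → Ω → ℝ)                      -- error of the treated unit
    (wstar : Fin J → ℝ)
    (Y : Fin J → ℕ → Ω → ℝ) (Y0 : ℕ → Ω → ℝ)
    (hY : ∀ j t ω, Y j t ω = μ j t + e j t ω)
    (hY0 : ∀ t ω, Y0 t ω = ∑ j, wstar j * μ j t + e0 t ω)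
    (Qd Sd : Fin J → ℝ)
    -- second moments of the signals and asymptotic orthogonality across units
    (hQ : ∀ j, Tendsto (fun T0 : ℕ => (1 / (T0 : ℝ)) * ∑ t ∈ Finset.range T0, (μ j t) ^ 2)
        atTop (nhds (Qd j)))
    (hμorth : ∀ i j, i ≠ j →
      Tendsto (fun T0 : ℕ => (1 / (T0 : ℝ)) * ∑ t ∈ Finset.range T0, μ i t * μ j t)
        atTop (nhds 0))
    -- limiting error second moments: variances Sd on the diagonal, zero off-diagonal
    (hSd : ∀ j, TendstoInProb
        (fun T0 ω => (1 / (T0 : ℝ)) * ∑ t ∈ Finset.range T0, (e j t ω) ^ 2) (Sd j))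
    (heorth : ∀ i j, i ≠ j → TendstoInProb
        (fun T0 ω => (1 / (T0 : ℝ)) * ∑ t ∈ Finset.range T0, e i t ω * e j t ω) 0)
    -- signals and errors are asymptotically uncorrelated
    (hμe : ∀ i j, TendstoInProb
        (fun T0 ω => (1 / (T0 : ℝ)) * ∑ t ∈ Finset.range T0, μ i t * e j t ω) 0)
    (hμe0 : ∀ i, TendstoInProb
        (fun T0 ω => (1 / (T0 : ℝ)) * ∑ t ∈ Finset.range T0, μ i t * e0 t ω) 0)
    (he0e : ∀ j, TendstoInProb
        (fun T0 ω => (1 / (T0 : ℝ)) * ∑ t ∈ Finset.range T0, e0 t ω * e j t ω) 0)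
    -- invertibility of Q* + Σ
    (hinv : IsUnit (Matrix.diagonal Qd + Matrix.diagonal Sd))
    -- the unconstrained least-squares estimator
    (what : ℕ → Ω → Fin J → ℝ)
    (hmin : ∀ (T0 : ℕ) (ω : Ω), IsMinOn
        (fun w : Fin J → ℝ =>
          (1 / (T0 : ℝ)) * ∑ t ∈ Finset.range T0, (Y0 t ω - ∑ j, w j * Y j t ω) ^ 2)
        Set.univ (what T0 ω))
    (wbar : Fin J → ℝ)
    (hwbar : wbar = wstar -
      ((Matrix.diagonal Qd + Matrix.diagonal Sd)⁻¹ * Matrix.diagonal Sd).mulVec wstar) :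
    TendstoInProb what wbar ∧
      ((Matrix.diagonal Sd).mulVec wstar ≠ 0 → wbar ≠ wstar) := by
  obtain rfl : Y = fun j t ω => μ j t + e j t ω := funext fun j => funext₂ (hY j)
  obtain rfl : Y0 = fun t ω => ∑ j, wstar j * μ j t + e0 t ω := funext₂ hY0
  have hdet : IsUnit (diagonal Qd + diagonal Sd).det := (isUnit_iff_isUnit_det _).1 hinv
  have hμμ := tendstoInProb_sampleMean_mul_diagonal (Ω := Ω) (x := fun j t _ => μ j t)
    (fun j => .of_tendsto (hQ j)) (fun i j hij => .of_tendsto (hμorth i j hij))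
  have hee := tendstoInProb_sampleMean_mul_diagonal hSd heorth
  have hgram := tendstoInProb_sampleGram_add hμμ hee hμe
  have hcross := tendstoInProb_sampleCross_add wstar hμμ hμe hμe0 he0e
  refine ⟨?_, fun hS => hwbar ▸ sub_inv_mul_mulVec_ne_self hdet hS⟩
  rw [hwbar, ← inv_add_mulVec_mulVec hdet]
  exact hgram.of_mulVec_eq hcross hdet fun T ω =>
    sampleGram_mulVec_eq_sampleCross_of_isMinOn (hmin T ω)

/-- under the measurement-error setup, the unconstrained least-squares
estimator of the SC weights converges in probability to `w* − (Q* + Σ)⁻¹ Σ w*`, and it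
is asymptotically biased whenever `Σ w* ≠ 0`. -/
theorem ls_asymptotic_bias
    {Ω : Type*} [MeasureSpace Ω] [IsProbabilityMeasure (ℙ : Measure Ω)]
    (J : ℕ) (hJ : 1 ≤ J)
    (μ : Fin J → ℕ → ℝ)                    -- signals of the untreated units
    (e : Fin J → ℕ → Ω → ℝ)               -- measurement errors of untreated units
    (e0 : ℕ → Ω → ℝ)                      -- error of the treated unit
    (wstar : Fin J → ℝ)
    (Y : Fin J → ℕ → Ω → ℝ) (Y0 : ℕ → Ω → ℝ)
    (hY : ∀ j t ω, Y j t ω = μ j t + e j t ω)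
    (hY0 : ∀ t ω, Y0 t ω = ∑ j, wstar j * μ j t + e0 t ω)
    (Qd Sd : Fin J → ℝ)
    -- second moments of the signals and asymptotic orthogonality across units
    (hQ : ∀ j, Tendsto (fun T0 : ℕ => (1 / (T0 : ℝ)) * ∑ t ∈ Finset.range T0, (μ j t) ^ 2)
        atTop (nhds (Qd j)))
    (hμorth : ∀ i j, i ≠ j →
      Tendsto (fun T0 : ℕ => (1 / (T0 : ℝ)) * ∑ t ∈ Finset.range T0, μ i t * μ j t)
        atTop (nhds 0))
    -- limiting error second moments: variances Sd on the diagonal, zero off-diagonal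
    (hSd : ∀ j, TendstoInProb
        (fun T0 ω => (1 / (T0 : ℝ)) * ∑ t ∈ Finset.range T0, (e j t ω) ^ 2) (Sd j))
    (heorth : ∀ i j, i ≠ j → TendstoInProb
        (fun T0 ω => (1 / (T0 : ℝ)) * ∑ t ∈ Finset.range T0, e i t ω * e j t ω) 0)
    -- signals and errors are asymptotically uncorrelated
    (hμe : ∀ i j, TendstoInProb
        (fun T0 ω => (1 / (T0 : ℝ)) * ∑ t ∈ Finset.range T0, μ i t * e j t ω) 0)
    (hμe0 : ∀ i, TendstoInProb
        (fun T0 ω => (1 / (T0 : ℝ)) * ∑ t ∈ Finset.range T0, μ i t * e0 t ω) 0)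
    (he0e : ∀ j, TendstoInProb
        (fun T0 ω => (1 / (T0 : ℝ)) * ∑ t ∈ Finset.range T0, e0 t ω * e j t ω) 0)
    -- invertibility of Q* + Σ
    (hinv : IsUnit (Matrix.diagonal Qd + Matrix.diagonal Sd))
    -- the unconstrained least-squares estimator
    (what : ℕ → Ω → Fin J → ℝ)
    (hmin : ∀ (T0 : ℕ) (ω : Ω), IsMinOn
        (fun w : Fin J → ℝ =>
          (1 / (T0 : ℝ)) * ∑ t ∈ Finset.range T0, (Y0 t ω - ∑ j, w j * Y j t ω) ^ 2)
        Set.univ (what T0 ω))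
    (wbar : Fin J → ℝ)
    (hwbar : wbar = wstar -
      ((Matrix.diagonal Qd + Matrix.diagonal Sd)⁻¹ * Matrix.diagonal Sd).mulVec wstar) :
    TendstoInProb what wbar ∧
      ((Matrix.diagonal Sd).mulVec wstar ≠ 0 → wbar ≠ wstar) :=
  ls_asymptotic_bias_general J μ e e0 wstar Y Y0 hY hY0 Qd Sd hQ hμorth hSd heorth hμe hμe0 he0e
    hinv what hmin wbar hwbar
end
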